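/- Let G be a signed eulerian graph that admits a stable nowhere-zero 3-flow. Then G is antibalanced and the valency of every vertex of G is a multiple of 6. -/
import Mathlib


open Finset

/-- A signed multigraph on vertex type `V` with edge type `E`: each edge `e`
consists of two half-edges indexed by `Bool`; `ends e i` is the end-vertex at
which the half-edge `(e, i)` is attached (loops and multiple edges are
allowed), and `sign e ∈ {1, -1}` is the sign of the edge `e`. -/
structure SignedGraph (V E : Type) where
  ends : E → Bool → V
  sign : E → ℤˣ

namespace SignedGraph

variable {V E : Type} [Fintype V] [Fintype E] [DecidableEq V] [DecidableEq E]

/-- The valency of `v` in the subgraph spanned by the edge set `S`: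
the number of half-edges of edges of `S` attached at `v` (a loop at `v`
contributes `2`). -/
def valencyOn (G : SignedGraph V E) (S : Finset E) (v : V) : ℕ :=
  (univ.filter fun p : E × Bool => p.1 ∈ S ∧ G.ends p.1 p.2 = v).card

/-- The valency of a vertex in `G`. -/
def valency (G : SignedGraph V E) (v : V) : ℕ :=
  G.valencyOn univ v

/-- The set of vertices incident with some edge of `S`. -/
def suppV (G : SignedGraph V E) (S : Finset E) : Finset V :=
  univ.filter fun v => ∃ e ∈ S, ∃ i : Bool, G.ends e i = v

/-- `u` and `v` are joined by an edge of `S`. -/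
def AdjOn (G : SignedGraph V E) (S : Finset E) (u v : V) : Prop :=
  ∃ e ∈ S, ∃ i : Bool, G.ends e i = u ∧ G.ends e (!i) = v

/-- The subgraph spanned by the edge set `S` is connected: any two vertices
incident with edges of `S` are joined by a walk using edges of `S`. -/
def ConnOn (G : SignedGraph V E) (S : Finset E) : Prop :=
  ∀ u ∈ G.suppV S, ∀ v ∈ G.suppV S, Relation.ReflTransGen (G.AdjOn S) u v

/-- `G` is connected (as a graph on the whole vertex set `V`). -/
def Connected (G : SignedGraph V E) : Prop :=
  Nonempty V ∧ ∀ u v : V, Relation.ReflTransGen (G.AdjOn univ) u v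

/-- The edge set `S` spans a circuit: a nonempty connected `2`-regular
subgraph. -/
def IsCircuit (G : SignedGraph V E) (S : Finset E) : Prop :=
  S.Nonempty ∧ G.ConnOn S ∧ ∀ v ∈ G.suppV S, G.valencyOn S v = 2

/-- The sign of a set of edges: the product of the signs of its edges. -/
def signOf (G : SignedGraph V E) (S : Finset E) : ℤˣ :=
  ∏ e ∈ S, G.sign e

/-- The negative edges among `S`. -/
def negEdges (G : SignedGraph V E) (S : Finset E) : Finset E :=
  S.filter fun e => G.sign e = -1

/-- A balanced circuit: a circuit of sign `+1`. -/
def IsBalancedCircuit (G : SignedGraph V E) (S : Finset E) : Prop :=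
  G.IsCircuit S ∧ G.signOf S = 1

/-- An unbalanced circuit: a circuit of sign `-1`. -/
def IsUnbalancedCircuit (G : SignedGraph V E) (S : Finset E) : Prop :=
  G.IsCircuit S ∧ G.signOf S = -1

/-- `G` is balanced: it contains no unbalanced circuit. -/
def Balanced (G : SignedGraph V E) : Prop :=
  ∀ S : Finset E, G.IsCircuit S → G.signOf S = 1

/-- `G` is tightly unbalanced: it is unbalanced, but for some edge `f` the
graph `G - f` is balanced. -/
def TightlyUnbalanced (G : SignedGraph V E) : Prop :=
  ¬ G.Balanced ∧ ∃ f : E, ∀ S : Finset E, G.IsCircuit S → f ∉ S → G.signOf S = 1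

/-- `G` is eulerian: connected with all valencies even. -/
def Eulerian (G : SignedGraph V E) : Prop :=
  G.Connected ∧ ∀ v : V, Even (G.valency v)

/-- The edge set `S` spans an eulerian subgraph of `G`. -/
def EulerianOn (G : SignedGraph V E) (S : Finset E) : Prop :=
  S.Nonempty ∧ G.ConnOn S ∧ ∀ v : V, Even (G.valencyOn S v)

/-- An orientation (bidirection) of `G`: `dir e i = true` means that the
half-edge `(e, i)` is directed towards its end-vertex, `dir e i = false` that
it is directed away from it.  Compatibility: a positive edge becomes an
ordinary directed edge (one half-edge in, one out) and a negative edge becomes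
a broken (extroverted or introverted) edge. -/
structure Orientation (G : SignedGraph V E) where
  dir : E → Bool → Bool
  compat : ∀ e : E, G.sign e = 1 ↔ dir e false ≠ dir e true

/-- `φ` is a flow on `G` with respect to the orientation `O`: at every vertex
`v`, the sum of values on half-edges directed into `v` equals the sum of
values on half-edges directed out of `v` (Kirchhoff's law). -/
def IsFlow {A : Type} [AddCommGroup A] (G : SignedGraph V E)
    (O : G.Orientation) (φ : E → A) : Prop :=
  ∀ v : V,
    ∑ p ∈ univ.filter (fun p : E × Bool => G.ends p.1 p.2 = v),
      (if O.dir p.1 p.2 then φ p.1 else -φ p.1) = 0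

/-- `G` admits a nowhere-zero `A`-flow. -/
def HasNZFlow (G : SignedGraph V E) (A : Type) [AddCommGroup A] : Prop :=
  ∃ (O : G.Orientation) (φ : E → A), G.IsFlow O φ ∧ ∀ e : E, φ e ≠ 0

/-- `G` is flow-admissible: it admits a nowhere-zero integer flow. -/
def FlowAdmissible (G : SignedGraph V E) : Prop :=
  ∃ (O : G.Orientation) (φ : E → ℤ), G.IsFlow O φ ∧ ∀ e : E, φ e ≠ 0

/-- `G` admits a nowhere-zero `k`-flow: an integer flow with all values in
`{±1, …, ±(k-1)}`. -/
def HasNZkFlow (G : SignedGraph V E) (k : ℕ) : Prop :=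
  ∃ (O : G.Orientation) (φ : E → ℤ), G.IsFlow O φ ∧
    ∀ e : E, φ e ≠ 0 ∧ |φ e| < (k : ℤ)

/-- `G` is triply odd: it can be decomposed into three edge-disjoint eulerian
subgraphs, each with an odd number of negative edges, sharing a common
vertex. -/
def TriplyOdd (G : SignedGraph V E) : Prop :=
  ∃ S₁ S₂ S₃ : Finset E,
    Disjoint S₁ S₂ ∧ Disjoint S₁ S₃ ∧ Disjoint S₂ S₃ ∧
    S₁ ∪ S₂ ∪ S₃ = univ ∧
    G.EulerianOn S₁ ∧ G.EulerianOn S₂ ∧ G.EulerianOn S₃ ∧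
    Odd (G.negEdges S₁).card ∧ Odd (G.negEdges S₂).card ∧
    Odd (G.negEdges S₃).card ∧
    ∃ v : V, v ∈ G.suppV S₁ ∧ v ∈ G.suppV S₂ ∧ v ∈ G.suppV S₃

/-- The edge set `P` spans a (nontrivial) path from `u` to `v`: a connected
subgraph in which `u` and `v` have valency `1` and all other vertices have
valency `2`. -/
def IsPathOn (G : SignedGraph V E) (P : Finset E) (u v : V) : Prop :=
  u ≠ v ∧ G.ConnOn P ∧ u ∈ G.suppV P ∧ v ∈ G.suppV P ∧
  G.valencyOn P u = 1 ∧ G.valencyOn P v = 1 ∧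
  ∀ w ∈ G.suppV P, w ≠ u → w ≠ v → G.valencyOn P w = 2

/-- `T` spans a signed circuit of type (2): the union of two unbalanced
circuits meeting at a single vertex. -/
def IsType2 (G : SignedGraph V E) (T : Finset E) : Prop :=
  ∃ (S₁ S₂ : Finset E) (v : V),
    G.IsUnbalancedCircuit S₁ ∧ G.IsUnbalancedCircuit S₂ ∧ Disjoint S₁ S₂ ∧
    G.suppV S₁ ∩ G.suppV S₂ = {v} ∧ S₁ ∪ S₂ = T

/-- `T` spans a signed circuit of type (3): the union of two vertex-disjoint
unbalanced circuits together with a path meeting the circuits only at its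
ends. -/
def IsType3 (G : SignedGraph V E) (T : Finset E) : Prop :=
  ∃ (S₁ S₂ P : Finset E) (u v : V),
    G.IsUnbalancedCircuit S₁ ∧ G.IsUnbalancedCircuit S₂ ∧
    Disjoint (G.suppV S₁) (G.suppV S₂) ∧
    G.IsPathOn P u v ∧ u ∈ G.suppV S₁ ∧ v ∈ G.suppV S₂ ∧
    G.suppV P ∩ G.suppV S₁ = {u} ∧ G.suppV P ∩ G.suppV S₂ = {v} ∧
    Disjoint P (S₁ ∪ S₂) ∧ S₁ ∪ S₂ ∪ P = T

/-- `T` spans a signed circuit: a balanced circuit, or a signed circuit of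
type (2) or (3). -/
def IsSignedCircuit (G : SignedGraph V E) (T : Finset E) : Prop :=
  G.IsBalancedCircuit T ∨ G.IsType2 T ∨ G.IsType3 T

/-- `T` spans a weak unbalanced bicircuit: two edge-disjoint unbalanced
circuits (not necessarily vertex-disjoint) joined by a possibly trivial path
having no edge in the two circuits. -/
def IsWeakBicircuit (G : SignedGraph V E) (T : Finset E) : Prop :=
  ∃ C₁ C₂ : Finset E,
    G.IsUnbalancedCircuit C₁ ∧ G.IsUnbalancedCircuit C₂ ∧ Disjoint C₁ C₂ ∧
    (((∃ v : V, v ∈ G.suppV C₁ ∧ v ∈ G.suppV C₂) ∧ T = C₁ ∪ C₂) ∨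
      ∃ (P : Finset E) (u v : V),
        G.IsPathOn P u v ∧ u ∈ G.suppV C₁ ∧ v ∈ G.suppV C₂ ∧
        Disjoint P (C₁ ∪ C₂) ∧ T = C₁ ∪ C₂ ∪ P)

/-- Every connected component of `G - f` contains an unbalanced circuit,
i.e. `G - f` has no balanced component. -/
def NoBalancedComponentAvoiding (G : SignedGraph V E) (f : E) : Prop :=
  ∀ u : V, ∃ S : Finset E,
    G.IsCircuit S ∧ G.signOf S = -1 ∧ f ∉ S ∧
    ∀ w ∈ G.suppV S, Relation.ReflTransGen (G.AdjOn (univ.erase f)) w u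

/-- `G` is 2-edge-connected: connected, and still connected after removing
any single edge. -/
def TwoEdgeConnected (G : SignedGraph V E) : Prop :=
  G.Connected ∧ ∀ f : E, ∀ u v : V,
    Relation.ReflTransGen (G.AdjOn (univ.erase f)) u v

/-- `G` is antibalanced: replacing its signature `σ` by `-σ` makes it
balanced. -/
def Antibalanced (G : SignedGraph V E) : Prop :=
  ∀ S : Finset E, G.IsCircuit S → (∏ e ∈ S, (-G.sign e)) = 1

end SignedGraph

open SignedGraph Finset in
/-- Let `G` be a signed eulerian graph that admits a stable
nowhere-zero `3`-flow.  Then `G` is antibalanced and the valency of every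
vertex of `G` is a multiple of `6`.

A stable nowhere-zero `3`-flow is presented in its positive orientation: all
flow values lie in `{1, 2}`, and stability at a vertex `v` says that any two
half-edges at `v` belonging to edges with equal flow values are directed the
same way (both towards `v` or both away from `v`). -/
theorem stmt18 {V E : Type} [Fintype V] [Fintype E] [DecidableEq V]
    [DecidableEq E] (G : SignedGraph V E) (hG : G.Eulerian)
    (hstable : ∃ (O : G.Orientation) (φ : E → ℤ),
      G.IsFlow O φ ∧ (∀ e : E, 0 < φ e ∧ φ e < 3) ∧
      ∀ (v : V) (e f : E) (i j : Bool),
        G.ends e i = v → G.ends f j = v → φ e = φ f →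
        O.dir e i = O.dir f j) :
    G.Antibalanced ∧ ∀ v : V, 6 ∣ G.valency v := by
  classical
  obtain ⟨O, φ, hflow, hrange, hstab⟩ := hstable
  have hφ : ∀ e, φ e = 1 ∨ φ e = 2 := fun e => by have := hrange e; omega
  set A : V → Finset (E × Bool) := fun v =>
    univ.filter fun p : E × Bool => G.ends p.1 p.2 = v ∧ φ p.1 = 1 with hA
  set B : V → Finset (E × Bool) := fun v =>
    univ.filter fun p : E × Bool => G.ends p.1 p.2 = v ∧ φ p.1 = 2 with hB
  have hmemA : ∀ (v : V) (p : E × Bool), p ∈ A v ↔ G.ends p.1 p.2 = v ∧ φ p.1 = 1 := by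
    intro v p; simp [hA]
  have hmemB : ∀ (v : V) (p : E × Bool), p ∈ B v ↔ G.ends p.1 p.2 = v ∧ φ p.1 = 2 := by
    intro v p; simp [hB]
  have hdisj : ∀ v : V, Disjoint (A v) (B v) := by
    intro v
    rw [Finset.disjoint_left]
    intro p hp hq
    rw [hmemA] at hp; rw [hmemB] at hq
    have h1 := hp.2; have h2 := hq.2; omega
  have hunion : ∀ v : V,
      univ.filter (fun p : E × Bool => G.ends p.1 p.2 = v) = A v ∪ B v := by
    intro v
    ext p
    simp only [mem_filter, mem_univ, true_and, mem_union, hmemA, hmemB]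
    rcases hφ p.1 with h | h <;> simp [h]
  have key : ∀ v : V, (A v).card = 2 * (B v).card ∧
      ((A v).Nonempty → ∃ dv : Bool,
        (∀ p ∈ A v, O.dir p.1 p.2 = dv) ∧ (∀ p ∈ B v, O.dir p.1 p.2 = !dv)) := by
    intro v
    have hfv := hflow v
    rw [hunion v, Finset.sum_union (hdisj v)] at hfv
    rcases (A v).eq_empty_or_nonempty with hAe | ⟨a0, ha0⟩
    · rw [hAe, Finset.sum_empty, zero_add] at hfv
      have hBe : (B v).card = 0 := by
        by_contra hB0
        have hBne : (B v).Nonempty := Finset.card_pos.mp (Nat.pos_of_ne_zero hB0)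
        obtain ⟨b0, hb0⟩ := hBne
        have hb0' := (hmemB v b0).mp hb0
        have hsame : ∀ p ∈ B v, (if O.dir p.1 p.2 then φ p.1 else -φ p.1)
            = (if O.dir b0.1 b0.2 then 2 else -2) := by
          intro p hp
          have hp' := (hmemB v p).mp hp
          rw [hstab v p.1 b0.1 p.2 b0.2 hp'.1 hb0'.1 (hp'.2.trans hb0'.2.symm), hp'.2]
        rw [Finset.sum_congr rfl hsame, Finset.sum_const, nsmul_eq_mul] at hfv
        have hcard : 0 < (B v).card := Finset.card_pos.mpr ⟨b0, hb0⟩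
        cases h : O.dir b0.1 b0.2 <;> rw [h] at hfv <;> norm_num at hfv <;>
          exact absurd hfv (Finset.nonempty_iff_ne_empty.mp ⟨b0, hb0⟩)
      constructor
      · rw [hAe]; simp [hBe]
      · intro h; exact absurd hAe (Finset.nonempty_iff_ne_empty.mp h)
    · have ha0' := (hmemA v a0).mp ha0
      have hsA : ∀ p ∈ A v, O.dir p.1 p.2 = O.dir a0.1 a0.2 := by
        intro p hp
        have hp' := (hmemA v p).mp hp
        exact hstab v p.1 a0.1 p.2 a0.2 hp'.1 ha0'.1 (hp'.2.trans ha0'.2.symm)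
      have hsumA : ∑ p ∈ A v, (if O.dir p.1 p.2 then φ p.1 else -φ p.1)
          = ((A v).card : ℤ) * (if O.dir a0.1 a0.2 then 1 else -1) := by
        rw [Finset.sum_congr rfl (fun p hp => ?_), Finset.sum_const, nsmul_eq_mul]
        have hp' := (hmemA v p).mp hp
        rw [hsA p hp, hp'.2]
      have hcA : 0 < (A v).card := Finset.card_pos.mpr ⟨a0, ha0⟩
      rcases (B v).eq_empty_or_nonempty with hBe | ⟨b0, hb0⟩
      · exfalso
        rw [hBe, Finset.sum_empty, add_zero, hsumA] at hfv
        cases h : O.dir a0.1 a0.2 <;> rw [h] at hfv <;> norm_num at hfv <;>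
          exact absurd hfv (Finset.nonempty_iff_ne_empty.mp ⟨a0, ha0⟩)
      · have hb0' := (hmemB v b0).mp hb0
        have hsB : ∀ p ∈ B v, O.dir p.1 p.2 = O.dir b0.1 b0.2 := by
          intro p hp
          have hp' := (hmemB v p).mp hp
          exact hstab v p.1 b0.1 p.2 b0.2 hp'.1 hb0'.1 (hp'.2.trans hb0'.2.symm)
        have hsumB : ∑ p ∈ B v, (if O.dir p.1 p.2 then φ p.1 else -φ p.1)
            = ((B v).card : ℤ) * (if O.dir b0.1 b0.2 then 2 else -2) := by
          rw [Finset.sum_congr rfl (fun p hp => ?_), Finset.sum_const, nsmul_eq_mul]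
          have hp' := (hmemB v p).mp hp
          rw [hsB p hp, hp'.2]
        rw [hsumA, hsumB] at hfv
        have hcB : 0 < (B v).card := Finset.card_pos.mpr ⟨b0, hb0⟩
        have hmain : O.dir b0.1 b0.2 = !(O.dir a0.1 a0.2) ∧
            (A v).card = 2 * (B v).card := by
          cases h1 : O.dir a0.1 a0.2 <;> cases h2 : O.dir b0.1 b0.2 <;>
            rw [h1, h2] at hfv <;> norm_num at hfv
          · exfalso; omega
          · exact ⟨rfl, by omega⟩
          · exact ⟨rfl, by omega⟩
          · exfalso; omega
        refine ⟨hmain.2, fun _ => ⟨O.dir a0.1 a0.2, hsA, fun p hp => ?_⟩⟩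
        rw [hsB p hp, hmain.1]
  have hAne : ∀ (e : E) (i : Bool), (A (G.ends e i)).Nonempty := by
    intro e i
    rcases hφ e with h | h
    · exact ⟨(e, i), (hmemA _ _).mpr ⟨rfl, h⟩⟩
    · have hb : (B (G.ends e i)).Nonempty := ⟨(e, i), (hmemB _ _).mpr ⟨rfl, h⟩⟩
      have hk := (key (G.ends e i)).1
      have hbpos := Finset.card_pos.mpr hb
      exact Finset.card_pos.mp (by omega)
  have hdex : ∀ v : V, ∃ dv : Bool, (A v).Nonempty →
      (∀ p ∈ A v, O.dir p.1 p.2 = dv) ∧ (∀ p ∈ B v, O.dir p.1 p.2 = !dv) := by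
    intro v
    by_cases h : (A v).Nonempty
    · obtain ⟨dv, h1⟩ := (key v).2 h
      exact ⟨dv, fun _ => h1⟩
    · exact ⟨true, fun h' => absurd h' h⟩
  choose d hd using hdex
  have hdir : ∀ (e : E) (i : Bool),
      O.dir e i = if φ e = 1 then d (G.ends e i) else !d (G.ends e i) := by
    intro e i
    rcases hφ e with h | h
    · rw [if_pos h]
      exact (hd _ (hAne e i)).1 (e, i) ((hmemA _ _).mpr ⟨rfl, h⟩)
    · rw [if_neg (by omega)]
      exact (hd _ (hAne e i)).2 (e, i) ((hmemB _ _).mpr ⟨rfl, h⟩)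
  have hsign : ∀ e : E,
      G.sign e = if d (G.ends e false) = d (G.ends e true) then -1 else 1 := by
    intro e
    have hc := O.compat e
    rw [hdir e false, hdir e true] at hc
    have hiff : ((if φ e = 1 then d (G.ends e false) else !d (G.ends e false)) ≠
        (if φ e = 1 then d (G.ends e true) else !d (G.ends e true))) ↔
        d (G.ends e false) ≠ d (G.ends e true) := by
      rcases hφ e with h | h <;>
        cases hu : d (G.ends e false) <;> cases hv : d (G.ends e true) <;>
          simp [h, hu, hv]
    rw [hiff] at hc
    by_cases hdd : d (G.ends e false) = d (G.ends e true)
    · rw [if_pos hdd]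
      rcases Int.units_eq_one_or (G.sign e) with h | h
      · exact absurd (hc.mp h) (by simp [hdd])
      · exact h
    · rw [if_neg hdd]
      exact hc.mpr hdd
  set m : Bool → ℤˣ := fun b => if b then 1 else -1 with hm
  have hvalEven : ∀ (S : Finset E), G.IsCircuit S → ∀ v : V, Even (G.valencyOn S v) := by
    intro S hS v
    by_cases h : v ∈ G.suppV S
    · rw [hS.2.2 v h]; exact even_two
    · have h0 : G.valencyOn S v = 0 := by
        rw [SignedGraph.valencyOn, Finset.card_eq_zero, Finset.filter_eq_empty_iff]
        rintro p - ⟨hp1, hp2⟩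
        exact h (mem_filter.mpr ⟨mem_univ _, ⟨p.1, hp1, p.2, hp2⟩⟩)
      rw [h0]; exact Even.zero
  constructor
  · intro S hS
    have step1 : ∀ e ∈ S, -G.sign e = m (d (G.ends e false)) * m (d (G.ends e true)) := by
      intro e _
      rw [hsign e]
      cases hu : d (G.ends e false) <;> cases hv : d (G.ends e true) <;>
        simp [hm, hu, hv]
    calc ∏ e ∈ S, -G.sign e
        = ∏ e ∈ S, ∏ i : Bool, m (d (G.ends e i)) := by
          refine Finset.prod_congr rfl fun e he => ?_
          rw [step1 e he, Fintype.prod_bool, mul_comm]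
      _ = ∏ p ∈ S ×ˢ (univ : Finset Bool), m (d (G.ends p.1 p.2)) := by
          rw [Finset.prod_product]
      _ = ∏ v : V, ∏ p ∈ (S ×ˢ (univ : Finset Bool)).filter
            (fun p => G.ends p.1 p.2 = v), m (d (G.ends p.1 p.2)) := by
          rw [Finset.prod_fiberwise_of_maps_to (fun p _ => mem_univ (G.ends p.1 p.2))]
      _ = ∏ v : V, m (d v) ^ (G.valencyOn S v) := by
          refine Finset.prod_congr rfl fun v _ => ?_
          rw [Finset.prod_congr rfl
            (fun p hp => by rw [(Finset.mem_filter.mp hp).2]), Finset.prod_const]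
          congr 1
          rw [SignedGraph.valencyOn]
          congr 1
          ext p
          simp [Finset.mem_product, and_comm]
      _ = 1 := by
          refine Finset.prod_eq_one fun v _ => ?_
          obtain ⟨k, hk⟩ := hvalEven S hS v
          rw [hk, ← two_mul, pow_mul]
          have h2 : m (d v) ^ 2 = 1 := by
            rcases Int.units_eq_one_or (m (d v)) with h | h <;> rw [h] <;> norm_num
          rw [h2, one_pow]
  · intro v
    have h1 : G.valency v = (A v).card + (B v).card := by
      rw [SignedGraph.valency, SignedGraph.valencyOn,
        show (univ.filter fun p : E × Bool => p.1 ∈ (univ : Finset E) ∧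
          G.ends p.1 p.2 = v) = A v ∪ B v from ?_]
      · exact Finset.card_union_of_disjoint (hdisj v)
      · rw [← hunion v]; ext p; simp
    have h2 := (key v).1
    obtain ⟨k, hk⟩ := hG.2 v
    omega
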